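/- Let G be a finite simple connected graph with a median-consistent vertex μ, and suppose G contains no induced subgraph isomorphic to Q_3^-. Then G contains an induced subgraph isomorphic to K_{2,3} if and only if there exist vertices x, y, z, z' with z ≠ z' and an ℓ ≥ 1 such that both (x,z,y,μ) and (x,z',y,μ) are distance-ℓ-static quartets. -/

import Mathlib

/-!
Since `μ` is medico, every edge joins two consecutive distance levels from `μ` (the median of `μ`
and an edge `uv` lies on that edge), and two distinct vertices `u, v` on a common level with a
common neighbour have exactly one common neighbour one level closer to `μ`, namely the median of
`μ, u, v`. In an induced `K_{2,3}` the two-vertex side cannot lie on a single level: two vertices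
of the other side would then share a level too, and the resulting square would give two such
common neighbours. So the three-vertex side sits on one level `ℓ` strictly between the two
others, which yields two static quartets. Conversely, given static quartets `(x,z,y,μ)` and
`(x,z',y,μ)`, let `m` and `m'` be the lower common neighbours of `x, z` and of `x, z'`. If
`m = m'`, then `{m, y}` and `{x, z, z'}` span an induced `K_{2,3}`; otherwise, together with the
lower common neighbour `n` of `z, z'`, the vertices `y, x, z, z', m, m', n` span an induced
`Q_3^-`.
-/

open SimpleGraph

/-- `z` lies on some shortest path connecting `u` and `v` in the graph `G`,
i.e. `z ∈ I(u,v)`. -/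
def OnShortestPath {V : Type*} (G : SimpleGraph V) (u v z : V) : Prop :=
  ∃ p : G.Walk u v, p.length = G.dist u v ∧ z ∈ p.support

/-- `m` is a median point of the triple `u, v, w`, i.e. `m ∈ I(u,v) ∩ I(u,w) ∩ I(v,w)`. -/
def IsMedianPt {V : Type*} (G : SimpleGraph V) (u v w m : V) : Prop :=
  OnShortestPath G u v m ∧ OnShortestPath G u w m ∧ OnShortestPath G v w m

/-- `μ` is a median-consistent (medico) vertex of `G`:
`|I(μ,v,w)| = 1` for all vertices `v, w`. -/
def Medico {V : Type*} (G : SimpleGraph V) (μ : V) : Prop :=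
  ∀ v w : V, ∃! m : V, IsMedianPt G μ v w m

/-- The quartet `(x, z, y, w)` is distance-`ℓ`-static:
`d(x,w) = d(z,w) = ℓ = d(y,w) - 1`, `d(x,z) = 2`, and `y` is a common neighbor
of `x` and `z` (for `ℓ ≥ 1`). -/
def DistLStatic {V : Type*} (G : SimpleGraph V) (x z y w : V) (ℓ : ℕ) : Prop :=
  1 ≤ ℓ ∧ G.dist x w = ℓ ∧ G.dist z w = ℓ ∧ G.dist y w = ℓ + 1 ∧
    G.dist x z = 2 ∧ G.Adj x y ∧ G.Adj y z

/-- `G` contains an induced copy of the graph `H`. -/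
def HasInducedCopy {W V : Type*} (H : SimpleGraph W) (G : SimpleGraph V) : Prop :=
  ∃ f : W ↪ V, ∀ a b : W, H.Adj a b ↔ G.Adj (f a) (f b)

/-- The 3-dimensional hypercube `Q_3`: vertices `{0,1}^3`, edges between vertices
differing in exactly one coordinate. -/
def CubeGraph3 : SimpleGraph (Fin 3 → Bool) :=
  SimpleGraph.fromRel fun a b => (Finset.univ.filter fun i => a i ≠ b i).card = 1

/-- `Q_3^-`: the hypercube `Q_3` with one vertex (and its incident edges) deleted. -/
def Q3Minus : SimpleGraph {v : Fin 3 → Bool // v ≠ fun _ => true} :=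
  CubeGraph3.induce {v : Fin 3 → Bool | v ≠ fun _ => true}

section Graphs

variable {V : Type*} {G : SimpleGraph V}

theorem onShortestPath_iff (hconn : G.Connected) {u v z : V} :
    OnShortestPath G u v z ↔ G.dist u z + G.dist z v = G.dist u v := by
  classical
  constructor
  · rintro ⟨p, hp, hz⟩
    have hsplit : (p.takeUntil z hz).length + (p.dropUntil z hz).length = p.length := by
      rw [← Walk.length_append, p.take_spec hz]
    have := dist_le (p.takeUntil z hz)
    have := dist_le (p.dropUntil z hz)
    have := hconn.dist_triangle (u := u) (v := z) (w := v)
    omega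
  · intro h
    obtain ⟨p, hp⟩ := hconn.exists_walk_length_eq_dist u z
    obtain ⟨q, hq⟩ := hconn.exists_walk_length_eq_dist z v
    exact ⟨p.append q, by rw [Walk.length_append, hp, hq, h], by simp⟩

theorem isMedianPt_iff (hconn : G.Connected) {u v w m : V} :
    IsMedianPt G u v w m ↔ G.dist u m + G.dist m v = G.dist u v ∧
      G.dist u m + G.dist m w = G.dist u w ∧ G.dist v m + G.dist m w = G.dist v w := by
  simp only [IsMedianPt, onShortestPath_iff hconn]

theorem hasInducedCopy_completeBipartiteGraph_iff {α β : Type*} :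
    HasInducedCopy (completeBipartiteGraph α β) G ↔ ∃ (p : α → V) (q : β → V),
      Function.Injective p ∧ Function.Injective q ∧ (∀ i j, G.Adj (p i) (q j)) ∧
        (∀ i i', ¬ G.Adj (p i) (p i')) ∧ ∀ j j', ¬ G.Adj (q j) (q j') := by
  constructor
  · rintro ⟨f, hf⟩
    refine ⟨f ∘ Sum.inl, f ∘ Sum.inr, f.injective.comp Sum.inl_injective,
      f.injective.comp Sum.inr_injective, fun i j => ?_, fun i i' => ?_, fun j j' => ?_⟩ <;>
      simp [← hf]
  · rintro ⟨p, q, hp, hq, hpq, hpp, hqq⟩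
    refine ⟨⟨Sum.elim p q, hp.sumElim hq fun i j h => (hpq i j).ne h⟩, ?_⟩
    rintro (i | j) (i' | j') <;> simp [hpq, hpp, hqq, G.adj_comm]

end Graphs

instance CubeGraph3.decidableAdj : DecidableRel CubeGraph3.Adj := fun a b =>
  decidable_of_iff _ (fromRel_adj _ a b).symm

/-- `y, x, z, z', m, m', n` label the cube vertices `000, 100, 010, 001, 110, 101, 011`; the value
at `111` is irrelevant. -/
def cubeVertexMap {V : Type*} (y x z z' m m' n : V) (v : Fin 3 → Bool) : V :=
  if v 0 then (if v 1 then m else if v 2 then m' else x)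
  else (if v 1 then (if v 2 then n else z) else (if v 2 then z' else y))

theorem CubeGraph3.eq_or_eq_of_ne_top : ∀ v : Fin 3 → Bool, v ≠ (fun _ => true) →
    v = ![false, false, false] ∨ v = ![true, false, false] ∨ v = ![false, true, false] ∨
      v = ![false, false, true] ∨ v = ![true, true, false] ∨ v = ![true, false, true] ∨
      v = ![false, true, true] := by
  decide

def IsLowerCommonNeighbor {V : Type*} (G : SimpleGraph V) (μ u v m : V) : Prop :=
  G.Adj m u ∧ G.Adj m v ∧ G.dist μ m + 1 = G.dist μ u ∧ G.dist μ m + 1 = G.dist μ v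

namespace Medico

variable {V : Type*} {G : SimpleGraph V} {μ : V}

theorem connected (hμ : Medico G μ) : G.Connected := by
  have hreach (v : V) : G.Reachable μ v := by
    obtain ⟨_, ⟨⟨p, -⟩, -⟩, -⟩ := hμ v v
    exact ⟨p⟩
  have : Nonempty V := ⟨μ⟩
  exact ⟨fun u v => (hreach u).symm.trans (hreach v)⟩

theorem dist_eq_add_one_or_of_adj (hμ : Medico G μ) {u v : V} (h : G.Adj u v) :
    G.dist μ v = G.dist μ u + 1 ∨ G.dist μ u = G.dist μ v + 1 := by
  have hconn := hμ.connected
  obtain ⟨m, hm, -⟩ := hμ u v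
  obtain ⟨hu, hv, huv⟩ := (isMedianPt_iff hconn).1 hm
  have h1 : G.dist u v = 1 := dist_eq_one_iff_adj.2 h
  have h1' : G.dist v u = 1 := dist_eq_one_iff_adj.2 h.symm
  rcases Nat.eq_zero_or_pos (G.dist u m) with hum | hum
  · obtain rfl := hconn.dist_eq_zero_iff.1 hum
    omega
  · obtain rfl := hconn.dist_eq_zero_iff.1 (show G.dist m v = 0 by omega)
    omega

theorem not_adj_of_dist_ne_add_one (hμ : Medico G μ) {u v : V}
    (h : G.dist μ v ≠ G.dist μ u + 1) (h' : G.dist μ u ≠ G.dist μ v + 1) : ¬ G.Adj u v :=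
  fun hadj => (hμ.dist_eq_add_one_or_of_adj hadj).elim h h'

theorem dist_eq_two (hμ : Medico G μ) {u v w : V} (hd : G.dist μ u = G.dist μ v) (hne : u ≠ v)
    (hu : G.Adj u w) (hv : G.Adj w v) : G.dist u v = 2 :=
  le_antisymm (by simpa using dist_le (Walk.cons hu (Walk.cons hv Walk.nil)))
    (hμ.connected.one_lt_dist_of_ne_of_not_adj hne
      (hμ.not_adj_of_dist_ne_add_one (by omega) (by omega)))

theorem exists_isLowerCommonNeighbor (hμ : Medico G μ) {u v : V}
    (hd : G.dist μ u = G.dist μ v) (huv : G.dist u v = 2) :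
    ∃ m, IsLowerCommonNeighbor G μ u v m := by
  have hconn := hμ.connected
  obtain ⟨m, hm, -⟩ := hμ u v
  obtain ⟨hu, hv, huv'⟩ := (isMedianPt_iff hconn).1 hm
  have hum : G.dist u m ≠ 0 := fun h0 => by
    obtain rfl := hconn.dist_eq_zero_iff.1 h0
    omega
  have hmv : G.dist m v ≠ 0 := fun h0 => by
    obtain rfl := hconn.dist_eq_zero_iff.1 h0
    rw [dist_comm] at huv
    omega
  have hmu : G.dist m u = 1 := by rw [dist_comm]; omega
  have hmv : G.dist m v = 1 := by omega
  exact ⟨m, dist_eq_one_iff_adj.1 hmu, dist_eq_one_iff_adj.1 hmv, by omega, by omega⟩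

theorem isMedianPt_of_isLowerCommonNeighbor (hμ : Medico G μ) {u v m : V} (hne : u ≠ v)
    (hm : IsLowerCommonNeighbor G μ u v m) : IsMedianPt G μ u v m := by
  obtain ⟨hmu, hmv, hu, hv⟩ := hm
  rw [isMedianPt_iff hμ.connected, hμ.dist_eq_two (by omega) hne hmu.symm hmv,
    dist_comm (u := u), dist_eq_one_iff_adj.2 hmu, dist_eq_one_iff_adj.2 hmv]
  omega

theorem isLowerCommonNeighbor_unique (hμ : Medico G μ) {u v m m' : V} (hne : u ≠ v)
    (hm : IsLowerCommonNeighbor G μ u v m) (hm' : IsLowerCommonNeighbor G μ u v m') : m = m' :=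
  (hμ u v).unique (hμ.isMedianPt_of_isLowerCommonNeighbor hne hm)
    (hμ.isMedianPt_of_isLowerCommonNeighbor hne hm')

theorem eq_or_eq_of_square (hμ : Medico G μ) {a b c d : V} (hab : G.dist μ a = G.dist μ b)
    (hcd : G.dist μ c = G.dist μ d) (hac : G.Adj a c) (had : G.Adj a d) (hbc : G.Adj b c)
    (hbd : G.Adj b d) : a = b ∨ c = d := by
  by_contra! hne
  rcases hμ.dist_eq_add_one_or_of_adj hac with hca | hac'
  · exact hne.1 (hμ.isLowerCommonNeighbor_unique hne.2
      ⟨hac, had, by omega, by omega⟩ ⟨hbc, hbd, by omega, by omega⟩)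
  · exact hne.2 (hμ.isLowerCommonNeighbor_unique hne.1
      ⟨hac.symm, hbc.symm, by omega, by omega⟩ ⟨had.symm, hbd.symm, by omega, by omega⟩)

theorem distLStatic_of_adj (hμ : Medico G μ) {a b c d : V} (hcd : c ≠ d) (hac : G.Adj a c)
    (had : G.Adj a d) (hbc : G.Adj b c) (hbd : G.Adj b d)
    (hab : G.dist μ b = G.dist μ a + 2) : DistLStatic G c d b μ (G.dist μ a + 1) := by
  have := hμ.dist_eq_add_one_or_of_adj hac; have := hμ.dist_eq_add_one_or_of_adj had
  have := hμ.dist_eq_add_one_or_of_adj hbc; have := hμ.dist_eq_add_one_or_of_adj hbd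
  refine ⟨by omega, ?_, ?_, ?_, hμ.dist_eq_two (by omega) hcd hbc.symm hbd, hbc.symm, hbd⟩ <;>
    rw [dist_comm] <;> omega

theorem exists_distLStatic_of_hasInducedCopy (hμ : Medico G μ)
    (h : HasInducedCopy (completeBipartiteGraph (Fin 2) (Fin 3)) G) :
    ∃ (x y z z' : V) (ℓ : ℕ), z ≠ z' ∧
      DistLStatic G x z y μ ℓ ∧ DistLStatic G x z' y μ ℓ := by
  obtain ⟨p, q, hp, hq, hpq, -, -⟩ := hasInducedCopy_completeBipartiteGraph_iff.1 h
  have hlevel (i j) := hμ.dist_eq_add_one_or_of_adj (hpq i j)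
  have := hlevel 0 0; have := hlevel 1 0
  rcases (by omega : G.dist μ (p 1) = G.dist μ (p 0) + 2 ∨
      G.dist μ (p 0) = G.dist μ (p 1) + 2 ∨ G.dist μ (p 0) = G.dist μ (p 1)) with hl | hl | hl
  · exact ⟨q 0, p 1, q 1, q 2, _, hq.ne (by decide),
      hμ.distLStatic_of_adj (hq.ne (by decide)) (hpq 0 0) (hpq 0 1) (hpq 1 0) (hpq 1 1) hl,
      hμ.distLStatic_of_adj (hq.ne (by decide)) (hpq 0 0) (hpq 0 2) (hpq 1 0) (hpq 1 2) hl⟩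
  · exact ⟨q 0, p 0, q 1, q 2, _, hq.ne (by decide),
      hμ.distLStatic_of_adj (hq.ne (by decide)) (hpq 1 0) (hpq 1 1) (hpq 0 0) (hpq 0 1) hl,
      hμ.distLStatic_of_adj (hq.ne (by decide)) (hpq 1 0) (hpq 1 2) (hpq 0 0) (hpq 0 2) hl⟩
  · exfalso
    have hsq {j j' : Fin 3} (h : G.dist μ (q j) = G.dist μ (q j')) : q j = q j' :=
      (hμ.eq_or_eq_of_square hl h (hpq 0 j) (hpq 0 j') (hpq 1 j) (hpq 1 j')).resolve_left
        (hp.ne (by decide))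
    have := hlevel 0 1; have := hlevel 0 2
    rcases (by omega : G.dist μ (q 0) = G.dist μ (q 1) ∨ G.dist μ (q 0) = G.dist μ (q 2) ∨
        G.dist μ (q 1) = G.dist μ (q 2)) with h | h | h <;>
      exact hq.ne (by decide) (hsq h)

theorem hasInducedCopy_completeBipartiteGraph_of_isLowerCommonNeighbor (hμ : Medico G μ)
    {x y z z' m : V} (hxz : x ≠ z) (hxz' : x ≠ z') (hzz' : z ≠ z')
    (hm : IsLowerCommonNeighbor G μ x z m) (hm' : IsLowerCommonNeighbor G μ x z' m)
    (hyx : G.Adj y x) (hyz : G.Adj y z) (hyz' : G.Adj y z') (hy : G.dist μ y = G.dist μ x + 1) :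
    HasInducedCopy (completeBipartiteGraph (Fin 2) (Fin 3)) G := by
  obtain ⟨hmx, hmz, hx, hz⟩ := hm
  obtain ⟨-, hmz', -, hz'⟩ := hm'
  have hmy : m ≠ y := fun h => by rw [h] at hx; omega
  refine hasInducedCopy_completeBipartiteGraph_iff.2
    ⟨![m, y], ![x, z, z'], ?_, ?_, ?_, ?_, ?_⟩
  · simp [Function.Injective, Fin.forall_fin_succ, hmy, hmy.symm]
  · simp [Function.Injective, Fin.forall_fin_succ, hxz, hxz', hzz', hxz.symm, hxz'.symm,
      hzz'.symm]
  · simp [Fin.forall_fin_succ, *]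
  all_goals
    refine fun i i' => hμ.not_adj_of_dist_ne_add_one ?_ ?_ <;> fin_cases i <;> fin_cases i' <;>
      simp <;> omega

theorem hasInducedCopy_Q3Minus_of_isLowerCommonNeighbor (hμ : Medico G μ)
    {x y z z' m m' n : V} (hxz : x ≠ z) (hxz' : x ≠ z') (hzz' : z ≠ z')
    (hm : IsLowerCommonNeighbor G μ x z m) (hm' : IsLowerCommonNeighbor G μ x z' m')
    (hn : IsLowerCommonNeighbor G μ z z' n) (hmm' : m ≠ m')
    (hyx : G.Adj y x) (hyz : G.Adj y z) (hyz' : G.Adj y z')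
    (hy : G.dist μ y = G.dist μ x + 1) : HasInducedCopy Q3Minus G := by
  obtain ⟨hmx, hmz, hlm, hlmz⟩ := hm
  obtain ⟨hm'x, hm'z', hlm', hlm'z'⟩ := hm'
  obtain ⟨hnz, hnz', hln, hln'⟩ := hn
  have hmz' : ¬ G.Adj m z' := fun h =>
    hmm' (hμ.isLowerCommonNeighbor_unique hxz' ⟨hmx, h, hlm, by omega⟩
      ⟨hm'x, hm'z', hlm', by omega⟩)
  have hm'z : ¬ G.Adj m' z := fun h =>
    hmm' (hμ.isLowerCommonNeighbor_unique hxz ⟨hmx, hmz, hlm, by omega⟩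
      ⟨hm'x, h, hlm', by omega⟩)
  have hnm : n ≠ m := fun h => hmz' (h ▸ hnz')
  have hnm' : n ≠ m' := fun h => hm'z (h ▸ hnz)
  have hnx : ¬ G.Adj n x := fun h =>
    hnm (hμ.isLowerCommonNeighbor_unique hxz ⟨h, hnz, by omega, hln⟩
      ⟨hmx, hmz, hlm, by omega⟩)
  have hz'm : ¬ G.Adj z' m := fun h => hmz' h.symm
  have hzm' : ¬ G.Adj z m' := fun h => hm'z h.symm
  have hxn : ¬ G.Adj x n := fun h => hnx h.symm
  -- Cube vertices of weight `k` lie on level `dist μ y - k`, so every pair not covered by the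
  -- facts above is separated, or made non-adjacent, by its levels.
  refine ⟨⟨fun v => cubeVertexMap y x z z' m m' n v.1, ?_⟩, ?_⟩
  · rintro ⟨a, ha⟩ ⟨b, hb⟩ hab
    rcases CubeGraph3.eq_or_eq_of_ne_top a ha with rfl | rfl | rfl | rfl | rfl | rfl | rfl <;>
      rcases CubeGraph3.eq_or_eq_of_ne_top b hb with rfl | rfl | rfl | rfl | rfl | rfl | rfl <;>
      simp only [cubeVertexMap, Matrix.cons_val_zero, Matrix.cons_val_one, Matrix.cons_val_two,
        Matrix.head_cons, Matrix.tail_cons, if_true, if_false, Bool.false_eq_true] at hab <;>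
      first
        | rfl
        | exact absurd hab (by assumption)
        | exact absurd hab.symm (by assumption)
        | exact absurd (congrArg (G.dist μ) hab) (by omega)
  · rintro ⟨a, ha⟩ ⟨b, hb⟩
    change CubeGraph3.Adj a b ↔
      G.Adj (cubeVertexMap y x z z' m m' n a) (cubeVertexMap y x z z' m m' n b)
    rcases CubeGraph3.eq_or_eq_of_ne_top a ha with rfl | rfl | rfl | rfl | rfl | rfl | rfl <;>
      rcases CubeGraph3.eq_or_eq_of_ne_top b hb with rfl | rfl | rfl | rfl | rfl | rfl | rfl <;>
      simp only [cubeVertexMap, Matrix.cons_val_zero, Matrix.cons_val_one, Matrix.cons_val_two,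
        Matrix.head_cons, Matrix.tail_cons, if_true, if_false, Bool.false_eq_true] <;>
      first
        | exact iff_of_true (by decide) (by assumption)
        | exact iff_of_true (by decide) (Adj.symm (by assumption))
        | exact iff_of_false (by decide) (by assumption)
        | exact iff_of_false (by decide) (hμ.not_adj_of_dist_ne_add_one (by omega) (by omega))

theorem hasInducedCopy_completeBipartiteGraph_of_distLStatic (hμ : Medico G μ)
    (hfree : ¬ HasInducedCopy Q3Minus G) {x y z z' : V} {ℓ : ℕ} (hzz' : z ≠ z')
    (h : DistLStatic G x z y μ ℓ) (h' : DistLStatic G x z' y μ ℓ) :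
    HasInducedCopy (completeBipartiteGraph (Fin 2) (Fin 3)) G := by
  obtain ⟨-, hx, hz, hy, hdxz, hxy, hyz⟩ := h
  obtain ⟨-, -, hz', -, hdxz', -, hyz'⟩ := h'
  rw [dist_comm] at hx hz hz' hy
  have hxz : x ≠ z := fun h => by simp [h] at hdxz
  have hxz' : x ≠ z' := fun h => by simp [h] at hdxz'
  obtain ⟨m, hm⟩ := hμ.exists_isLowerCommonNeighbor (hx.trans hz.symm) hdxz
  obtain ⟨m', hm'⟩ := hμ.exists_isLowerCommonNeighbor (hx.trans hz'.symm) hdxz'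
  obtain rfl | hmm' := eq_or_ne m m'
  · exact hμ.hasInducedCopy_completeBipartiteGraph_of_isLowerCommonNeighbor hxz hxz' hzz' hm hm'
      hxy.symm hyz hyz' (by omega)
  · obtain ⟨n, hn⟩ := hμ.exists_isLowerCommonNeighbor (hz.trans hz'.symm)
      (hμ.dist_eq_two (hz.trans hz'.symm) hzz' hyz.symm hyz')
    exact (hfree (hμ.hasInducedCopy_Q3Minus_of_isLowerCommonNeighbor hxz hxz' hzz' hm hm' hn hmm'
      hxy.symm hyz hyz' (by omega))).elim

end Medico

theorem stmt10_general {V : Type*} (G : SimpleGraph V)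
    (μ : V) (hμ : Medico G μ)
    (hfree : ¬ HasInducedCopy Q3Minus G) :
    HasInducedCopy (completeBipartiteGraph (Fin 2) (Fin 3)) G ↔
      ∃ (x y z z' : V) (ℓ : ℕ), z ≠ z' ∧
        DistLStatic G x z y μ ℓ ∧ DistLStatic G x z' y μ ℓ :=
  ⟨hμ.exists_distLStatic_of_hasInducedCopy,
    fun ⟨_, _, _, _, _, hzz', h, h'⟩ =>
      hμ.hasInducedCopy_completeBipartiteGraph_of_distLStatic hfree hzz' h h'⟩

/-- Let `G` be a finite connected graph with medico vertex `μ` and with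
no induced `Q_3^-`.  Then `G` contains an induced `K_{2,3}` iff there are vertices
`x, y, z, z'` with `z ≠ z'` and some `ℓ ≥ 1` such that both `(x,z,y,μ)` and
`(x,z',y,μ)` are distance-`ℓ`-static quartets. -/
theorem stmt10 {V : Type*} [Fintype V] (G : SimpleGraph V) (hconn : G.Connected)
    (μ : V) (hμ : Medico G μ)
    (hfree : ¬ HasInducedCopy Q3Minus G) :
    HasInducedCopy (completeBipartiteGraph (Fin 2) (Fin 3)) G ↔
      ∃ (x y z z' : V) (ℓ : ℕ), z ≠ z' ∧
        DistLStatic G x z y μ ℓ ∧ DistLStatic G x z' y μ ℓ :=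
  stmt10_general G μ hμ hfree
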